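/- arXiv:1703.04901 — 2 statements merged into one kernel-verified Lean document; each statement's English description precedes it below -/
import Mathlib

section
/- (Theorem 1, part (i), existence, uniqueness and convergence) Suppose c_i < 1/2 for all i. Then there exists a unique x* ∈ Δ̃_n with F_c(x*) = x*, this x* lies in int(Δ_n), and for every initial condition x(1) ∈ Δ̃_n the sequence defined by x(s+1) = F_c(x(s)) converges to x* as s → ∞. -/
open scoped Classical BigOperators

/-- The standard simplex Δₙ in ℝⁿ. -/
def DFsimplex (n : ℕ) : Set (Fin n → ℝ) :=
  {x | (∀ i, 0 ≤ x i) ∧ ∑ i, x i = 1}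

/-- Δ̃ₙ : the simplex with its vertices removed, i.e. points of Δₙ with all coordinates < 1. -/
def DFsimplexTilde (n : ℕ) : Set (Fin n → ℝ) :=
  {x | x ∈ DFsimplex n ∧ ∀ i, x i < 1}

/-- int(Δₙ) : points of Δₙ with all coordinates > 0. -/
def DFsimplexInt (n : ℕ) : Set (Fin n → ℝ) :=
  {x | x ∈ DFsimplex n ∧ ∀ i, 0 < x i}

/-- αᶜ(x) = (∑ⱼ cⱼ/(1-xⱼ))⁻¹. -/
noncomputable def DFalpha {n : ℕ} (c x : Fin n → ℝ) : ℝ :=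
  (∑ j, c j / (1 - x j))⁻¹

/-- The DeGroot–Friedkin map Fᶜ : fixes the vertices eᵢ, and elsewhere
Fᶜ(x)ᵢ = αᶜ(x)·cᵢ/(1-xᵢ). -/
noncomputable def DFmap {n : ℕ} (c : Fin n → ℝ) (x : Fin n → ℝ) : Fin n → ℝ :=
  if ∃ i, x = Pi.single i 1 then x
  else fun i => DFalpha c x * (c i / (1 - x i))

/-!
A fixed point of `F_c` in `Δ̃ₙ` is a point `x*` of the open simplex with `x*ᵢ (1 - x*ᵢ)`
proportional to `cᵢ`. One is found by the intermediate value theorem in the coordinate of a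
largest weight, the other coordinates being the smaller roots of this balance equation; `cᵢ < 1/2`
is what lets the coordinates add up to `1`.

In the ratios `yᵢ / x*ᵢ`, one step of `F_c` replaces each ratio by a multiple of the reciprocal of
the `x*`-weighted average of the other ratios. For `n ≥ 3` this strictly shrinks `max / min` of the
ratios (Hilbert's projective distance to `x*`) unless `y = x*`. This gives uniqueness at once, and
convergence by LaSalle's invariance principle on a compact sublevel set.
-/

open Filter Topology

section Lyapunov

variable {X : Type*} [TopologicalSpace X] {K : Set X} {f : X → X} {V : X → ℝ} {p : X}
  {x : ℕ → X}

/-- LaSalle's invariance principle for maps: every limit point `z` of the orbit satisfies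
`V (f z) = V z`, which forces `z = p`. -/
theorem IsCompact.tendsto_of_strictLyapunov [FirstCountableTopology X] (hK : IsCompact K)
    (hfK : Set.MapsTo f K K) (hf : ContinuousOn f K) (hV : ContinuousOn V K) (hfp : f p = p)
    (hdec : ∀ y ∈ K, y ≠ p → V (f y) < V y) (hx0 : x 0 ∈ K) (hx : ∀ s, x (s + 1) = f (x s)) :
    Tendsto x atTop (𝓝 p) := by
  have hxK : ∀ s, x s ∈ K := by
    intro s
    induction s with
    | zero => exact hx0
    | succ s ih => rw [hx]; exact hfK ih
  have hanti : Antitone (V ∘ x) := antitone_nat_of_succ_le fun s => by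
    rcases eq_or_ne (x s) p with h | h
    · simp only [Function.comp, hx, h, hfp, le_refl]
    · simpa only [Function.comp, hx] using (hdec _ (hxK s) h).le
  have hlimit : ∀ ψ : ℕ → ℕ, Tendsto ψ atTop atTop → ∀ z ∈ K,
      Tendsto (x ∘ ψ) atTop (𝓝 z) → z = p := by
    intro ψ hψ z hz hxz
    have hxz' : Tendsto (x ∘ ψ) atTop (𝓝[K] z) :=
      tendsto_nhdsWithin_iff.2 ⟨hxz, Eventually.of_forall fun k => hxK (ψ k)⟩
    have hVz : Tendsto (fun k => V (x (ψ k))) atTop (𝓝 (V z)) := (hV z hz).tendsto.comp hxz'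
    have hVfz : Tendsto (fun k => V (x (ψ k + 1))) atTop (𝓝 (V (f z))) := by
      simp only [hx]
      exact (hV (f z) (hfK hz)).tendsto.comp (((hf z hz).tendsto_nhdsWithin hfK).comp hxz')
    have hbound : ∀ s, V z ≤ V (x s) := fun s =>
      le_of_tendsto hVz ((hψ.eventually_ge_atTop s).mono fun k hk => hanti hk)
    by_contra hne
    linarith [hdec z hz hne, ge_of_tendsto hVfz (Eventually.of_forall fun k => hbound (ψ k + 1))]
  refine tendsto_of_subseq_tendsto fun ns hns => ?_
  obtain ⟨z, hz, φ, hφ, hlim⟩ := hK.tendsto_subseq fun k => hxK (ns k)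
  have hzp := hlimit (ns ∘ φ) (hns.comp hφ.tendsto_atTop) z hz hlim
  exact ⟨φ, hzp ▸ hlim⟩

end Lyapunov

section HilbertRatio

variable {ι : Type*} [Fintype ι]

theorem sum_sub_le_sum_sub {f g : ι → ℝ} {i : ι} (h : ∀ j, j ≠ i → f j ≤ g j) :
    ∑ j, f j - f i ≤ ∑ j, g j - g i := by
  simp only [← Finset.sum_erase_eq_sub (Finset.mem_univ i)]
  exact Finset.sum_le_sum fun j hj => h j (Finset.ne_of_mem_erase hj)

theorem sum_sub_lt_sum_sub {f g : ι → ℝ} {i j : ι} (h : ∀ k, k ≠ i → f k ≤ g k)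
    (hji : j ≠ i) (hj : f j < g j) : ∑ k, f k - f i < ∑ k, g k - g i := by
  simp only [← Finset.sum_erase_eq_sub (Finset.mem_univ i)]
  exact Finset.sum_lt_sum (fun k hk => h k (Finset.ne_of_mem_erase hk))
    ⟨j, Finset.mem_erase.2 ⟨hji, Finset.mem_univ j⟩, hj⟩

variable [Nonempty ι] {x y : ι → ℝ}

noncomputable def ratioSup (x y : ι → ℝ) : ℝ :=
  Finset.univ.sup' Finset.univ_nonempty fun i => y i / x i

noncomputable def ratioInf (x y : ι → ℝ) : ℝ :=
  Finset.univ.inf' Finset.univ_nonempty fun i => y i / x i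

/-- The exponential of Hilbert's projective distance between `x` and `y`. -/
noncomputable def hilbertRatio (x y : ι → ℝ) : ℝ :=
  ratioSup x y / ratioInf x y

theorem div_le_ratioSup (i : ι) : y i / x i ≤ ratioSup x y :=
  Finset.le_sup' (fun i => y i / x i) (Finset.mem_univ i)

theorem ratioInf_le_div (i : ι) : ratioInf x y ≤ y i / x i :=
  Finset.inf'_le (fun i => y i / x i) (Finset.mem_univ i)

theorem le_ratioSup_mul (hx : ∀ i, 0 < x i) (i : ι) : y i ≤ ratioSup x y * x i :=
  (div_le_iff₀ (hx i)).1 (div_le_ratioSup i)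

theorem ratioInf_mul_le (hx : ∀ i, 0 < x i) (i : ι) : ratioInf x y * x i ≤ y i :=
  (le_div_iff₀ (hx i)).1 (ratioInf_le_div i)

theorem continuous_ratioSup (x : ι → ℝ) : Continuous (ratioSup x) :=
  Continuous.finset_sup'_apply _ fun i _ => (continuous_apply i).div_const _

theorem continuous_ratioInf (x : ι → ℝ) : Continuous (ratioInf x) :=
  Continuous.finset_inf'_apply _ fun i _ => (continuous_apply i).div_const _

theorem ratioInf_pos (hx : ∀ i, 0 < x i) (hy : ∀ i, 0 < y i) : 0 < ratioInf x y := by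
  obtain ⟨i, -, hi⟩ := Finset.exists_mem_eq_inf' Finset.univ_nonempty fun i => y i / x i
  rw [ratioInf, hi]
  exact div_pos (hy i) (hx i)

theorem one_le_ratioSup (hx : ∀ i, 0 < x i) (hxs : ∑ i, x i = 1) (hys : ∑ i, y i = 1) :
    1 ≤ ratioSup x y :=
  calc 1 = ∑ i, y i := hys.symm
    _ ≤ ∑ i, ratioSup x y * x i := Finset.sum_le_sum fun i _ => le_ratioSup_mul hx i
    _ = ratioSup x y := by rw [← Finset.mul_sum, hxs, mul_one]

theorem ratioInf_le_one (hx : ∀ i, 0 < x i) (hxs : ∑ i, x i = 1) (hys : ∑ i, y i = 1) :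
    ratioInf x y ≤ 1 :=
  calc ratioInf x y = ∑ i, ratioInf x y * x i := by rw [← Finset.mul_sum, hxs, mul_one]
    _ ≤ ∑ i, y i := Finset.sum_le_sum fun i _ => ratioInf_mul_le hx i
    _ = 1 := hys

theorem ratioInf_lt_ratioSup (hx : ∀ i, 0 < x i) (hxs : ∑ i, x i = 1) (hys : ∑ i, y i = 1)
    (hne : y ≠ x) : ratioInf x y < ratioSup x y := by
  refine lt_of_not_ge fun hle => hne (funext fun i => ?_)
  have hsup := one_le_ratioSup hx hxs hys
  have hinf := ratioInf_le_one hx hxs hys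
  have h1 := le_ratioSup_mul (y := y) hx i
  have h2 := ratioInf_mul_le (y := y) hx i
  nlinarith [hx i]

theorem hilbertRatio_lt_of_forall_lt {B : ℝ} (hpos : ∀ k, 0 < y k / x k)
    (h : ∀ i k, y i / x i < B * (y k / x k)) : hilbertRatio x y < B := by
  obtain ⟨i, -, hi⟩ := Finset.exists_mem_eq_sup' Finset.univ_nonempty fun i => y i / x i
  obtain ⟨k, -, hk⟩ := Finset.exists_mem_eq_inf' Finset.univ_nonempty fun i => y i / x i
  rw [hilbertRatio, ratioSup, ratioInf, hi, hk, div_lt_iff₀ (hpos k)]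
  exact h i k

theorem ratioInf_mul_one_sub_le (hx : ∀ i, 0 < x i) (hxs : ∑ i, x i = 1) (hys : ∑ i, y i = 1)
    (i : ι) : ratioInf x y * (1 - x i) ≤ 1 - y i := by
  have h := sum_sub_le_sum_sub (i := i) fun j _ => ratioInf_mul_le (y := y) hx j
  rwa [← Finset.mul_sum, hxs, hys, mul_one, ← mul_one_sub] at h

theorem one_sub_le_ratioSup_mul (hx : ∀ i, 0 < x i) (hxs : ∑ i, x i = 1) (hys : ∑ i, y i = 1)
    (i : ι) : 1 - y i ≤ ratioSup x y * (1 - x i) := by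
  have h := sum_sub_le_sum_sub (i := i) fun j _ => le_ratioSup_mul (y := y) hx j
  rwa [← Finset.mul_sum, hxs, hys, mul_one, ← mul_one_sub] at h

/-- The two bounds above cannot both be equalities when a third index `j` exists: that would
force `y j / x j` to be both the infimum and the supremum of the ratios. -/
theorem ratioInf_mul_one_sub_lt_or_lt (hx : ∀ i, 0 < x i) (hxs : ∑ i, x i = 1)
    (hys : ∑ i, y i = 1) (hne : y ≠ x) {i k j : ι} (hji : j ≠ i) (hjk : j ≠ k) :
    ratioInf x y * (1 - x i) < 1 - y i ∨ 1 - y k < ratioSup x y * (1 - x k) := by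
  rcases lt_or_ge (ratioInf x y * x j) (y j) with h | h
  · left
    have h' := sum_sub_lt_sum_sub (fun l _ => ratioInf_mul_le (y := y) hx l) hji h
    rwa [← Finset.mul_sum, hxs, hys, mul_one, ← mul_one_sub] at h'
  · right
    have hlt : y j < ratioSup x y * x j :=
      h.trans_lt (mul_lt_mul_of_pos_right (ratioInf_lt_ratioSup hx hxs hys hne) (hx j))
    have h' := sum_sub_lt_sum_sub (fun l _ => le_ratioSup_mul (y := y) hx l) hjk hlt
    rwa [← Finset.mul_sum, hxs, hys, mul_one, ← mul_one_sub] at h'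

end HilbertRatio

section LowerRoot

/-- The smaller root of `t * (1 - t) = a`. -/
noncomputable def lowerRoot (a : ℝ) : ℝ := (1 - √(1 - 4 * a)) / 2

theorem continuous_lowerRoot : Continuous lowerRoot := by
  unfold lowerRoot
  fun_prop

@[simp]
theorem lowerRoot_zero : lowerRoot 0 = 0 := by
  simp [lowerRoot]

theorem lowerRoot_mul_one_sub {a : ℝ} (ha : a ≤ 1 / 4) : lowerRoot a * (1 - lowerRoot a) = a := by
  have h := Real.sq_sqrt (show 0 ≤ 1 - 4 * a by linarith)
  unfold lowerRoot
  linear_combination (-1 / 4 : ℝ) * h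

theorem lowerRoot_pos {a : ℝ} (ha : 0 < a) : 0 < lowerRoot a := by
  have : √(1 - 4 * a) < 1 := (Real.sqrt_lt' one_pos).2 (by linarith)
  unfold lowerRoot
  linarith

theorem le_lowerRoot {a : ℝ} (ha₀ : 0 ≤ a) (ha : a ≤ 1 / 4) : a ≤ lowerRoot a := by
  have h0 : 0 ≤ lowerRoot a := by
    have : √(1 - 4 * a) ≤ 1 := Real.sqrt_le_one.2 (by linarith)
    unfold lowerRoot
    linarith
  nlinarith [lowerRoot_mul_one_sub ha]

end LowerRoot

theorem mul_one_sub_mul_le_quarter (s : ℝ) {r : ℝ} (hr₀ : 0 ≤ r) (hr₁ : r ≤ 1) :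
    s * (1 - s) * r ≤ 1 / 4 := by
  nlinarith [mul_nonneg hr₀ (sq_nonneg (s - 1 / 2))]

section DeGrootFriedkin

variable {n : ℕ} {c x y : Fin n → ℝ}

theorem mem_DFsimplexInt (hpos : ∀ i, 0 < x i) (hsum : ∑ i, x i = 1) : x ∈ DFsimplexInt n :=
  ⟨⟨fun i => (hpos i).le, hsum⟩, hpos⟩

/-- With `s₁ = c i₀ / (1 - c i₀)`, each lower root is at least its argument, and these arguments
add up to `1 - s₁`. -/
theorem one_le_add_sum_lowerRoot (hc : ∀ i, 0 < c i) (hcsum : ∑ i, c i = 1) {i₀ : Fin n}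
    (hi₀ : ∀ i, c i ≤ c i₀) (hc₀ : c i₀ < 1 / 2) :
    1 ≤ c i₀ / (1 - c i₀) + ∑ i ∈ Finset.univ.erase i₀,
      lowerRoot (c i₀ / (1 - c i₀) * (1 - c i₀ / (1 - c i₀)) * (c i / c i₀)) := by
  set c₀ := c i₀
  set s₁ := c₀ / (1 - c₀) with hs₁
  have hpos : 0 < c₀ := hc i₀
  have hne : (1 : ℝ) - c₀ ≠ 0 := by linarith
  have hrest : ∑ i ∈ Finset.univ.erase i₀, c i = 1 - c₀ := by
    rw [Finset.sum_erase_eq_sub (Finset.mem_univ _), hcsum]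
  calc (1 : ℝ) = s₁ + s₁ * (1 - s₁) / c₀ * ∑ i ∈ Finset.univ.erase i₀, c i := by
        rw [hrest, hs₁]
        field_simp
        ring
    _ = s₁ + ∑ i ∈ Finset.univ.erase i₀, s₁ * (1 - s₁) * (c i / c₀) := by
        rw [Finset.mul_sum]
        congr 1
        exact Finset.sum_congr rfl fun i _ => by ring
    _ ≤ _ := by
        have hs₁_pos : 0 < s₁ := div_pos hpos (by linarith)
        have hs₁_lt : s₁ < 1 := (div_lt_one (by linarith)).2 (by linarith)
        gcongr with i
        have hr := div_pos (hc i) hpos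
        exact le_lowerRoot (by positivity)
          (mul_one_sub_mul_le_quarter _ hr.le ((div_le_one hpos).2 (hi₀ i)))

theorem exists_balanced_point [NeZero n] (hc : ∀ i, 0 < c i) (hcsum : ∑ i, c i = 1)
    (hchalf : ∀ i, c i < 1 / 2) :
    ∃ xs ∈ DFsimplexInt n, ∃ β > 0, ∀ i, c i = β * (xs i * (1 - xs i)) := by
  obtain ⟨i₀, -, hi₀⟩ := Finset.exists_max_image Finset.univ c Finset.univ_nonempty
  set c₀ := c i₀
  have hc₀ : 0 < c₀ := hc i₀
  have hquarter : ∀ s i, s * (1 - s) * (c i / c₀) ≤ 1 / 4 := fun s i =>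
    mul_one_sub_mul_le_quarter s (div_pos (hc i) hc₀).le
      ((div_le_one hc₀).2 (hi₀ i (Finset.mem_univ i)))
  -- the `i₀`-th coordinate is the parameter `s`, the others are balanced against it
  set P : ℝ → Fin n → ℝ := fun s =>
    Function.update (fun i => lowerRoot (s * (1 - s) * (c i / c₀))) i₀ s with hP
  have hsum : ∀ s, ∑ i, P s i =
      s + ∑ i ∈ Finset.univ.erase i₀, lowerRoot (s * (1 - s) * (c i / c₀)) := fun s => by
    rw [Finset.sum_update_of_mem (Finset.mem_univ _), Finset.sdiff_singleton_eq_erase]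
  have hcont : Continuous fun s => ∑ i, P s i := by
    simp only [hsum]
    exact continuous_id.add
      (continuous_finsetSum _ fun i _ => continuous_lowerRoot.comp (by fun_prop))
  have hs₁ : 0 ≤ c₀ / (1 - c₀) := div_nonneg hc₀.le (by linarith [hchalf i₀])
  obtain ⟨s, ⟨hs₀, hss₁⟩, hs⟩ := intermediate_value_Icc hs₁ hcont.continuousOn
    ⟨by simp [hP], (hsum _).symm ▸ one_le_add_sum_lowerRoot hc hcsum
      (fun i => hi₀ i (Finset.mem_univ i)) (hchalf i₀)⟩
  have hs_pos : 0 < s := lt_of_le_of_ne hs₀ (by rintro rfl; simp [hP] at hs)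
  have hs_lt : s < 1 := hss₁.trans_lt ((div_lt_one (by linarith [hchalf i₀])).2
    (by linarith [hchalf i₀]))
  have hs_ne : (1 : ℝ) - s ≠ 0 := by linarith
  refine ⟨P s, mem_DFsimplexInt (fun i => ?_) hs, c₀ / (s * (1 - s)),
    div_pos hc₀ (by nlinarith), fun i => ?_⟩
  · rcases eq_or_ne i i₀ with rfl | hi
    · simpa [hP] using hs_pos
    · simp only [hP, Function.update_of_ne hi]
      exact lowerRoot_pos (by have := hc i; positivity)
  · rcases eq_or_ne i i₀ with rfl | hi
    · simp only [hP, Function.update_self]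
      exact (div_mul_cancel₀ _ (by nlinarith)).symm
    · simp only [hP, Function.update_of_ne hi, lowerRoot_mul_one_sub (hquarter _ _)]
      field_simp

theorem DFsimplexInt_subset_DFsimplexTilde (hn : 2 ≤ n) : DFsimplexInt n ⊆ DFsimplexTilde n := by
  rintro x ⟨hx, hpos⟩
  refine ⟨hx, fun i => ?_⟩
  have : Nontrivial (Fin n) := Fin.nontrivial_iff_two_le.2 hn
  obtain ⟨j, hj⟩ := exists_ne i
  have h := sum_sub_lt_sum_sub (f := 0) (g := x) (fun k _ => (hpos k).le) hj (hpos j)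
  simp only [Pi.zero_apply, Finset.sum_const_zero, sub_zero, hx.2] at h
  linarith

theorem DFmap_of_lt_one (hy : ∀ i, y i < 1) :
    DFmap c y = fun i => DFalpha c y * (c i / (1 - y i)) := by
  rw [DFmap, if_neg]
  rintro ⟨i, rfl⟩
  simpa using hy i

theorem DFalpha_pos [NeZero n] (hc : ∀ i, 0 < c i) (hy : ∀ i, y i < 1) : 0 < DFalpha c y :=
  inv_pos.2 (Finset.sum_pos (fun i _ => div_pos (hc i) (sub_pos.2 (hy i))) Finset.univ_nonempty)

theorem DFmap_mem_DFsimplexInt [NeZero n] (hc : ∀ i, 0 < c i) (hy : y ∈ DFsimplexTilde n) :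
    DFmap c y ∈ DFsimplexInt n := by
  have hα := DFalpha_pos hc hy.2
  rw [DFmap_of_lt_one hy.2]
  refine mem_DFsimplexInt (fun i => mul_pos hα (div_pos (hc i) (sub_pos.2 (hy.2 i)))) ?_
  rw [← Finset.mul_sum, DFalpha, inv_mul_cancel₀ (inv_pos.1 hα).ne']

theorem continuousOn_DFmap [NeZero n] (hc : ∀ i, 0 < c i) :
    ContinuousOn (DFmap c) {y | ∀ i, y i < 1} := by
  have hden : ∀ i, ∀ y ∈ {y : Fin n → ℝ | ∀ i, y i < 1}, 1 - y i ≠ 0 :=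
    fun i y hy => (sub_pos.2 (hy i)).ne'
  refine ContinuousOn.congr ?_ fun y hy => DFmap_of_lt_one hy
  refine continuousOn_pi.2 fun i => ContinuousOn.mul ?_
    (continuousOn_const.div (by fun_prop) (hden i))
  exact (continuousOn_finsetSum _ fun j _ => continuousOn_const.div (by fun_prop) (hden j)).inv₀
    fun y hy => (inv_pos.1 (DFalpha_pos hc hy)).ne'

variable {xs : Fin n → ℝ} {β : ℝ}

theorem DFmap_eq_self_of_balanced (hn : 2 ≤ n) (hxs : xs ∈ DFsimplexInt n) (hβ : 0 < β)
    (hbal : ∀ i, c i = β * (xs i * (1 - xs i))) : DFmap c xs = xs := by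
  have hlt := (DFsimplexInt_subset_DFsimplexTilde hn hxs).2
  have hq : ∀ i, c i / (1 - xs i) = β * xs i := fun i => by
    rw [hbal, div_eq_iff (sub_pos.2 (hlt i)).ne']
    ring
  rw [DFmap_of_lt_one hlt, DFalpha]
  funext i
  simp only [hq, ← Finset.mul_sum, hxs.1.2, mul_one]
  field_simp

theorem hilbertRatio_DFmap_lt [NeZero n] (hn : 3 ≤ n) (hc : ∀ i, 0 < c i)
    (hxs : xs ∈ DFsimplexInt n) (hβ : 0 < β) (hbal : ∀ i, c i = β * (xs i * (1 - xs i)))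
    (hy : y ∈ DFsimplexInt n) (hne : y ≠ xs) :
    hilbertRatio xs (DFmap c y) < hilbertRatio xs y := by
  have hy1 := (DFsimplexInt_subset_DFsimplexTilde (by omega) hy).2
  have hxs1 := (DFsimplexInt_subset_DFsimplexTilde (by omega) hxs).2
  have hκ : 0 < DFalpha c y * β := mul_pos (DFalpha_pos hc hy1) hβ
  have hq : ∀ i, DFmap c y i / xs i = DFalpha c y * β * ((1 - xs i) / (1 - y i)) := fun i => by
    have := (hxs.2 i).ne'
    have := (sub_pos.2 (hy1 i)).ne'
    simp only [DFmap_of_lt_one hy1]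
    rw [hbal i]
    field_simp
  have hm := ratioInf_pos hxs.2 hy.2
  apply hilbertRatio_lt_of_forall_lt
  · intro k
    rw [hq]
    exact mul_pos hκ (div_pos (sub_pos.2 (hxs1 k)) (sub_pos.2 (hy1 k)))
  intro i k
  obtain ⟨j, hji, hjk⟩ := ENat.exists_ne_ne_of_three_le (by simpa using hn) i k
  have hi := ratioInf_mul_one_sub_le hxs.2 hxs.1.2 hy.1.2 i
  have hk := one_sub_le_ratioSup_mul hxs.2 hxs.1.2 hy.1.2 k
  have key : ratioInf xs y * (1 - xs i) * (1 - y k) < (1 - y i) * (ratioSup xs y * (1 - xs k)) := by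
    have := sub_pos.2 (hy1 k)
    have := mul_pos hm (sub_pos.2 (hxs1 i))
    rcases ratioInf_mul_one_sub_lt_or_lt hxs.2 hxs.1.2 hy.1.2 hne hji hjk with h | h <;> nlinarith
  simp only [hq, hilbertRatio]
  rw [mul_left_comm, mul_lt_mul_iff_right₀ hκ, div_mul_div_comm,
    div_lt_div_iff₀ (sub_pos.2 (hy1 i)) (mul_pos hm (sub_pos.2 (hy1 k)))]
  linarith

theorem eq_of_DFmap_eq_self (hn : 3 ≤ n) (hc : ∀ i, 0 < c i) (hxs : xs ∈ DFsimplexInt n)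
    (hβ : 0 < β) (hbal : ∀ i, c i = β * (xs i * (1 - xs i))) (hy : y ∈ DFsimplexTilde n)
    (hfix : DFmap c y = y) : y = xs := by
  have : NeZero n := ⟨by omega⟩
  by_contra hne
  have hy' : y ∈ DFsimplexInt n := hfix ▸ DFmap_mem_DFsimplexInt hc hy
  have h := hilbertRatio_DFmap_lt hn hc hxs hβ hbal hy' hne
  rw [hfix] at h
  exact lt_irrefl _ h

theorem tendsto_DFmap_orbit (hn : 3 ≤ n) (hc : ∀ i, 0 < c i) (hxs : xs ∈ DFsimplexInt n)
    (hβ : 0 < β) (hbal : ∀ i, c i = β * (xs i * (1 - xs i))) {x : ℕ → Fin n → ℝ}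
    (hx₀ : x 0 ∈ DFsimplexInt n) (hx : ∀ s, x (s + 1) = DFmap c (x s)) :
    Tendsto x atTop (𝓝 xs) := by
  have : NeZero n := ⟨by omega⟩
  set K₀ := hilbertRatio xs (x 0)
  -- the sublevel set `{hilbertRatio xs ≤ K₀}`, written so as to be visibly closed
  set K := stdSimplex ℝ (Fin n) ∩ {y | ratioSup xs y ≤ K₀ * ratioInf xs y}
  have hK : IsCompact K := (isCompact_stdSimplex ℝ (Fin n)).inter_right
    (isClosed_le (continuous_ratioSup xs) (continuous_const.mul (continuous_ratioInf xs)))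
  have hK₀ : 0 ≤ K₀ := div_nonneg (zero_le_one.trans (one_le_ratioSup hxs.2 hxs.1.2 hx₀.1.2))
    (ratioInf_pos hxs.2 hx₀.2).le
  have hKint : K ⊆ DFsimplexInt n := by
    rintro y ⟨hy, hyK⟩
    have hyK : ratioSup xs y ≤ K₀ * ratioInf xs y := hyK
    have hm : 0 < ratioInf xs y := by
      by_contra! h
      linarith [one_le_ratioSup hxs.2 hxs.1.2 hy.2, mul_nonpos_of_nonneg_of_nonpos hK₀ h]
    exact mem_DFsimplexInt
      (fun i => (mul_pos hm (hxs.2 i)).trans_le (ratioInf_mul_le hxs.2 i)) hy.2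
  have hKtilde := hKint.trans (DFsimplexInt_subset_DFsimplexTilde (by omega))
  have hfix := DFmap_eq_self_of_balanced (by omega) hxs hβ hbal
  have hdec : ∀ y ∈ K, y ≠ xs → hilbertRatio xs (DFmap c y) < hilbertRatio xs y :=
    fun y hy hne => hilbertRatio_DFmap_lt hn hc hxs hβ hbal (hKint hy) hne
  have hmaps : Set.MapsTo (DFmap c) K K := by
    intro y hy
    have hFy := DFmap_mem_DFsimplexInt hc (hKtilde hy)
    have hle : hilbertRatio xs (DFmap c y) ≤ hilbertRatio xs y := by
      rcases eq_or_ne y xs with rfl | hne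
      · rw [hfix]
      · exact (hdec y hy hne).le
    have hyK : hilbertRatio xs y ≤ K₀ := (div_le_iff₀ (ratioInf_pos hxs.2 (hKint hy).2)).2 hy.2
    exact ⟨hFy.1, (div_le_iff₀ (ratioInf_pos hxs.2 hFy.2)).1 (hle.trans hyK)⟩
  refine hK.tendsto_of_strictLyapunov hmaps ((continuousOn_DFmap hc).mono fun y hy => (hKtilde hy).2)
    ?_ hfix hdec ⟨hx₀.1, (div_le_iff₀ (ratioInf_pos hxs.2 hx₀.2)).1 le_rfl⟩ hx
  exact (continuous_ratioSup xs).continuousOn.div (continuous_ratioInf xs).continuousOn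
    fun y hy => (ratioInf_pos hxs.2 (hKint hy).2).ne'

end DeGrootFriedkin

/-- Theorem 1, part (i): if cᵢ < 1/2 for all i, there is a unique fixed point x* of Fᶜ
in Δ̃ₙ; it lies in int(Δₙ), and every trajectory x(s+1) = Fᶜ(x(s)) starting from
x(1) ∈ Δ̃ₙ converges to x*. -/
theorem stmt_15 (n : ℕ) (hn : 3 ≤ n) (c : Fin n → ℝ)
    (hc : ∀ i, 0 < c i) (hcsum : ∑ i, c i = 1) (hchalf : ∀ i, c i < 1 / 2) :
    ∃ xs ∈ DFsimplexInt n, DFmap c xs = xs ∧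
      (∀ y ∈ DFsimplexTilde n, DFmap c y = y → y = xs) ∧
      ∀ x : ℕ → Fin n → ℝ, x 1 ∈ DFsimplexTilde n →
        (∀ s, 1 ≤ s → x (s + 1) = DFmap c (x s)) →
        Filter.Tendsto x Filter.atTop (nhds xs) := by
  have : NeZero n := ⟨by omega⟩
  obtain ⟨xs, hxs, β, hβ, hbal⟩ := exists_balanced_point hc hcsum hchalf
  refine ⟨xs, hxs, DFmap_eq_self_of_balanced (by omega) hxs hβ hbal,
    fun y hy hfix => eq_of_DFmap_eq_self hn hc hxs hβ hbal hy hfix, fun x hx₁ hx => ?_⟩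
  have hx₂ : x 2 ∈ DFsimplexInt n := by
    rw [hx 1 le_rfl]
    exact DFmap_mem_DFsimplexInt hc hx₁
  exact (tendsto_add_atTop_iff_nat 2).1
    (tendsto_DFmap_orbit hn hc hxs hβ hbal hx₂ fun s => hx (s + 2) (by omega))
end

section
/- For the uniform weight vector c = (1/n, …, 1/n), the uniform point x* = (1/n, …, 1/n) ∈ int(Δ_n) satisfies F_c(x*) = x*, and it is the only fixed point of F_c in Δ̃_n. -/
open scoped Classical BigOperators

/-!
At a fixed point `x` of `F_c` off the vertices, `x i * (1 - x i) = α_c(x) * c i`. For uniform `c`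
the right-hand side is a positive constant, so any two coordinates are either equal or sum to `1`;
the latter is impossible with a third positive coordinate, hence `x` is constant and equals the
uniform point. That the uniform point is fixed follows since `F_c(x)` always sums to `1`.
-/

section DFmap

variable {n : ℕ} (c : Fin n → ℝ) {x : Fin n → ℝ}

theorem DFmap_of_forall_ne_one (hx : ∀ i, x i ≠ 1) :
    DFmap c x = fun i => DFalpha c x * (c i / (1 - x i)) := by
  rw [DFmap, if_neg]
  rintro ⟨i, rfl⟩
  exact hx i (by simp)

variable [NeZero n] {c}

theorem sum_div_one_sub_pos (hc : ∀ i, 0 < c i) (hx : ∀ i, x i < 1) :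
    0 < ∑ j, c j / (1 - x j) :=
  Finset.sum_pos (fun j _ => div_pos (hc j) (sub_pos.2 (hx j))) Finset.univ_nonempty

theorem DFalpha_pos_s17 (hc : ∀ i, 0 < c i) (hx : ∀ i, x i < 1) : 0 < DFalpha c x :=
  inv_pos.2 (sum_div_one_sub_pos hc hx)

theorem sum_DFmap_eq_one (hc : ∀ i, 0 < c i) (hx : ∀ i, x i < 1) : ∑ i, DFmap c x i = 1 := by
  rw [DFmap_of_forall_ne_one c fun i => (hx i).ne, ← Finset.mul_sum, DFalpha]
  exact inv_mul_cancel₀ (sum_div_one_sub_pos hc hx).ne'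

end DFmap

theorem mul_one_sub_eq_of_DFmap_eq_self {n : ℕ} {c x : Fin n → ℝ} (hx : ∀ i, x i ≠ 1)
    (hfix : DFmap c x = x) (i : Fin n) : x i * (1 - x i) = DFalpha c x * c i := by
  have hxi : DFalpha c x * (c i / (1 - x i)) = x i := by
    simpa [DFmap_of_forall_ne_one c hx] using congrFun hfix i
  have : 1 - x i ≠ 0 := sub_ne_zero.2 (hx i).symm
  nth_rewrite 1 [← hxi]
  field_simp

theorem eq_or_add_eq_one_of_mul_one_sub_eq {a b : ℝ} (h : a * (1 - a) = b * (1 - b)) :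
    a = b ∨ a + b = 1 := by
  have : (a - b) * (1 - a - b) = 0 := by linear_combination h
  rcases mul_eq_zero.1 this with h | h
  · exact Or.inl (by linarith)
  · exact Or.inr (by linarith)

theorem eq_of_mul_one_sub_eq_const {ι : Type*} [Fintype ι] (hι : 3 ≤ Fintype.card ι)
    {x : ι → ℝ} (hsum : ∑ i, x i = 1) {κ : ℝ} (hκ : 0 < κ) (hx : ∀ i, x i * (1 - x i) = κ)
    (i j : ι) : x i = x j := by
  have hpos : ∀ k, 0 < x k := fun k => by nlinarith [hx k]
  rcases eq_or_ne i j with rfl | hne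
  · rfl
  refine (eq_or_add_eq_one_of_mul_one_sub_eq ((hx i).trans (hx j).symm)).resolve_right ?_
  intro hij
  obtain ⟨k, -, hk⟩ : ∃ k ∈ Finset.univ, k ∉ ({i, j} : Finset ι) := by
    refine Finset.exists_mem_notMem_of_card_lt_card ?_
    exact Finset.card_le_two.trans_lt (by rw [Finset.card_univ]; omega)
  rw [Finset.mem_insert, Finset.mem_singleton, not_or] at hk
  have hsum3 : ∑ l ∈ ({k, i, j} : Finset ι), x l = x k + (x i + x j) := by
    rw [Finset.sum_insert (by simp [hk.1, hk.2]), Finset.sum_pair hne]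
  have : ∑ l ∈ ({k, i, j} : Finset ι), x l ≤ 1 :=
    hsum ▸ Finset.sum_le_sum_of_subset_of_nonneg (Finset.subset_univ _) fun l _ _ => (hpos l).le
  linarith [hpos k]

theorem eq_const_of_sum_eq_one {n : ℕ} {x : Fin n → ℝ} (hconst : ∀ i j, x i = x j)
    (hsum : ∑ i, x i = 1) : x = fun _ => (1 : ℝ) / n := by
  funext i
  rw [Finset.sum_congr rfl fun j _ => hconst j i, Finset.sum_const, Finset.card_univ,
    Fintype.card_fin, nsmul_eq_mul] at hsum
  rw [eq_div_iff_mul_eq (left_ne_zero_of_mul_eq_one hsum), mul_comm, hsum]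

/-- For the uniform weight vector c = (1/n,…,1/n), the uniform point (1/n,…,1/n) lies in
int(Δₙ), is a fixed point of Fᶜ, and is the only fixed point of Fᶜ in Δ̃ₙ. -/
theorem stmt_17 (n : ℕ) (hn : 3 ≤ n) :
    (fun _ : Fin n => (1 : ℝ) / n) ∈ DFsimplexInt n ∧
    DFmap (fun _ : Fin n => (1 : ℝ) / n) (fun _ : Fin n => (1 : ℝ) / n) =
      (fun _ : Fin n => (1 : ℝ) / n) ∧
    ∀ y ∈ DFsimplexTilde n,
      DFmap (fun _ : Fin n => (1 : ℝ) / n) y = y → y = fun _ : Fin n => (1 : ℝ) / n := by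
  have : NeZero n := ⟨by omega⟩
  have hc : ∀ _ : Fin n, 0 < (1 : ℝ) / n := fun _ => by positivity
  have hlt : ∀ _ : Fin n, (1 : ℝ) / n < 1 := fun _ =>
    (div_lt_one (by positivity)).2 (by exact_mod_cast (by omega : 1 < n))
  refine ⟨⟨⟨fun i => (hc i).le, ?_⟩, hc⟩, ?_, ?_⟩
  · simp
  · refine eq_const_of_sum_eq_one (fun i j => ?_) (sum_DFmap_eq_one hc hlt)
    rw [DFmap_of_forall_ne_one _ fun i => (hlt i).ne]
  · rintro y ⟨⟨-, hsum⟩, hy⟩ hfix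
    refine eq_const_of_sum_eq_one (eq_of_mul_one_sub_eq_const (by simpa using hn) hsum
      (mul_pos (DFalpha_pos_s17 hc hy) (hc 0)) ?_) hsum
    exact mul_one_sub_eq_of_DFmap_eq_self (fun i => (hy i).ne) hfix
end
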